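/- Assume (p₀), (V_α), (G_β). If A ⊂ G is infinite and connected, then for any x₀ ∈ G, cap(A ∩ B(x₀,L)) → ∞ as L → ∞. Consequently, for any u > 0, the random interlacement set I^u intersects A almost surely. -/

import Mathlib

/-!
Since `A` is infinite and balls are finite, `A` contains `N` points pairwise farther apart than
any given `R`. For such a set `F` the union bound `P_y(hit F) ≤ ∑_{z ∈ F} P_y(hit z)` and the
escape identity `e_{x}(x) = 1 / G(x,x)` give
`e_F(x) ≥ 1 / G(x,x) - λ(x) ∑_{z ∈ F, z ≠ x} P_x(hit z)`, while
`P_x(hit z) = G(x,z) / G(z,z) ≤ (C_g / c_g) R^{-(α-β)}`. For `R` large every point of `F` thus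
carries equilibrium mass at least `1 / (2 C_g)`, so `cap F ≥ N / (2 C_g)`. Monotonicity of the
capacity of finite sets can be read off the avoidance law `P(I^u ∩ K = ∅) = exp(-u cap K)`, which
also gives `P(I^u ∩ A = ∅) ≤ exp(-u cap F)` for every finite `F ⊆ A`.
-/

open scoped ENNReal

open Classical in
noncomputable def nstep {V : Type*} (p : V → V → ℝ) : ℕ → V → V → ℝ
  | 0, x, y => if x = y then 1 else 0
  | n + 1, x, y => ∑' z, nstep p n x z * p z y

noncomputable def green {V : Type*} (p : V → V → ℝ) (lam : V → ℝ) (x y : V) : ℝ :=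
  (1 / lam y) * ∑' n, nstep p n x y

open Classical in
noncomputable def killedKernel {V : Type*} (p : V → V → ℝ) (U : Set V) (x y : V) : ℝ :=
  if x ∈ U ∧ y ∈ U then p x y else 0

noncomputable def killedGreen {V : Type*} (p : V → V → ℝ) (lam : V → ℝ) (U : Set V) (x y : V) : ℝ :=
  (1 / lam y) * ∑' n, nstep (killedKernel p U) n x y

open Classical in
noncomputable def hitProb {V : Type*} (p : V → V → ℝ) (A : Set V) (x : V) : ℝ :=
  ∑' n : ℕ, ∑' y : V, if y ∈ A then nstep (fun a b => if a ∈ A then 0 else p a b) n x y else 0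

open Classical in
noncomputable def eqMeasure {V : Type*} (p : V → V → ℝ) (lam : V → ℝ) (A : Set V) (x : V) : ℝ :=
  if x ∈ A then lam x * (1 - ∑' y, p x y * hitProb p A y) else 0

noncomputable def capaE {V : Type*} (p : V → V → ℝ) (lam : V → ℝ) (A : Set V) : ℝ≥0∞ :=
  ∑' x : V, Set.indicator A (fun v => ENNReal.ofReal (eqMeasure p lam A v)) x

open Function Filter Topology

section

variable {V : Type*} {p : V → V → ℝ}

lemma tsum_mul_eq_sum_of_support_finite {f : V → ℝ} (hf : (support f).Finite) (g : V → ℝ) :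
    ∑' y, f y * g y = ∑ y ∈ hf.toFinset, f y * g y :=
  tsum_eq_sum' ((support_mul_subset_left f g).trans hf.coe_toFinset.superset)

lemma summable_mul_of_support_finite {f : V → ℝ} (hf : (support f).Finite) (g : V → ℝ) :
    Summable fun y => f y * g y :=
  summable_of_hasFiniteSupport (hf.subset (support_mul_subset_left f g))

section Nstep

variable {k k' : V → V → ℝ}

open Classical in
lemma nstep_zero (k : V → V → ℝ) (x y : V) :
    nstep k 0 x y = if x = y then 1 else 0 := rfl

lemma nstep_succ (k : V → V → ℝ) (n : ℕ) (x y : V) :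
    nstep k (n + 1) x y = ∑' z, nstep k n x z * k z y := rfl

lemma nstep_nonneg (hk : ∀ a b, 0 ≤ k a b) (n : ℕ) (x y : V) : 0 ≤ nstep k n x y := by
  induction n generalizing y with
  | zero => rw [nstep_zero]; split_ifs <;> norm_num
  | succ n ih => exact tsum_nonneg fun z => mul_nonneg (ih z) (hk z y)

lemma nstep_support_finite (hk : ∀ a, (support (k a)).Finite) (n : ℕ) (x : V) :
    (support (nstep k n x)).Finite := by
  induction n with
  | zero =>
    refine (Set.finite_singleton x).subset fun y hy => ?_
    by_contra h
    exact hy (if_neg (Ne.symm h))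
  | succ n ih =>
    refine (ih.biUnion fun z _ => hk z).subset fun y hy => ?_
    obtain ⟨z, hz⟩ : ∃ z, nstep k n x z * k z y ≠ 0 := by
      by_contra! h
      exact hy ((tsum_congr h).trans tsum_zero)
    exact Set.mem_biUnion (left_ne_zero_of_mul hz) (right_ne_zero_of_mul hz)

lemma nstep_succ' (hk : ∀ a, (support (k a)).Finite) (n : ℕ) (x y : V) :
    nstep k (n + 1) x y = ∑' z, k x z * nstep k n z y := by
  induction n generalizing x y with
  | zero =>
    rw [nstep_succ, tsum_eq_single x fun z hz => by rw [nstep_zero, if_neg hz.symm, zero_mul],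
      tsum_eq_single y fun z hz => by rw [nstep_zero, if_neg hz, mul_zero]]
    simp [nstep_zero]
  | succ n ih =>
    calc nstep k (n + 2) x y
        = ∑' z, ∑ w ∈ (hk x).toFinset, k x w * (nstep k n w z * k z y) := by
          refine tsum_congr fun z => ?_
          rw [ih, tsum_mul_eq_sum_of_support_finite (hk x), Finset.sum_mul]
          simp_rw [mul_assoc]
      _ = ∑ w ∈ (hk x).toFinset, k x w * nstep k (n + 1) w y := by
          rw [Summable.tsum_finsetSum fun w _ =>
            (summable_mul_of_support_finite (nstep_support_finite hk n w) _).mul_left _]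
          simp_rw [tsum_mul_left, nstep_succ]
      _ = ∑' w, k x w * nstep k (n + 1) w y :=
          (tsum_mul_eq_sum_of_support_finite (hk x) _).symm

lemma nstep_mono (hk : ∀ a b, 0 ≤ k a b) (hle : ∀ a b, k a b ≤ k' a b)
    (hk' : ∀ a, (support (k' a)).Finite) (n : ℕ) (x y : V) :
    nstep k n x y ≤ nstep k' n x y := by
  induction n generalizing y with
  | zero => exact le_rfl
  | succ n ih =>
    have hterm : ∀ z, nstep k n x z * k z y ≤ nstep k' n x z * k' z y := fun z =>
      mul_le_mul (ih z) (hle z y) (hk z y)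
        (nstep_nonneg (fun a b => (hk a b).trans (hle a b)) n x z)
    have hsum' := summable_mul_of_support_finite (nstep_support_finite hk' n x) (k' · y)
    exact Summable.tsum_le_tsum hterm
      (hsum'.of_nonneg_of_le (fun z => mul_nonneg (nstep_nonneg hk n x z) (hk z y)) hterm) hsum'

end Nstep

structure IsTransientKernel (p : V → V → ℝ) : Prop where
  nonneg : ∀ a b, 0 ≤ p a b
  support_finite : ∀ a, (support (p a)).Finite
  summable_nstep : ∀ x y, Summable fun n => nstep p n x y

open Classical in
/-- `nstep (stopKernel p S) n x y` is the weight of the `n`-step paths from `x` to `y` that do not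
visit `S` before time `n`, so that `hitProb p S = ∑ₙ ∑_{y ∈ S} nstep (stopKernel p S) n · y`. -/
noncomputable def stopKernel (p : V → V → ℝ) (S : Set V) (a b : V) : ℝ :=
  if a ∈ S then 0 else p a b

open Classical in
lemma hitProb_eq (p : V → V → ℝ) (S : Set V) (x : V) :
    hitProb p S x = ∑' n, ∑' y, if y ∈ S then nstep (stopKernel p S) n x y else 0 := rfl

lemma stopKernel_of_notMem {S : Set V} {a : V} (ha : a ∉ S) (b : V) :
    stopKernel p S a b = p a b := if_neg ha

lemma stopKernel_nonneg (hp0 : ∀ a b, 0 ≤ p a b) (S : Set V) (a b : V) :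
    0 ≤ stopKernel p S a b := by
  unfold stopKernel; split_ifs
  exacts [le_rfl, hp0 a b]

lemma stopKernel_anti (hp0 : ∀ a b, 0 ≤ p a b) {S S' : Set V} (hS : S' ⊆ S) (a b : V) :
    stopKernel p S a b ≤ stopKernel p S' a b := by
  by_cases h : a ∈ S
  · rw [stopKernel, if_pos h]
    exact stopKernel_nonneg hp0 S' a b
  · rw [stopKernel_of_notMem h, stopKernel_of_notMem (mt (@hS a) h)]

lemma stopKernel_le (hp0 : ∀ a b, 0 ≤ p a b) (S : Set V) (a b : V) :
    stopKernel p S a b ≤ p a b := by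
  simpa [stopKernel] using stopKernel_anti hp0 (Set.empty_subset S) a b

lemma stopKernel_support_finite (hpf : ∀ a, (support (p a)).Finite) (S : Set V) (a : V) :
    (support (stopKernel p S a)).Finite :=
  (hpf a).subset fun b hb h => hb (by simp [stopKernel, h])

lemma nstep_stopKernel_succ_of_mem {S : Set V} {x : V} (hx : x ∈ S) (m : ℕ) (z : V) :
    nstep (stopKernel p S) (m + 1) x z = 0 := by
  induction m generalizing z with
  | zero =>
    rw [nstep_succ, tsum_eq_single x fun w hw => by rw [nstep_zero, if_neg hw.symm, zero_mul]]
    simp [stopKernel, hx]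
  | succ m ih => simp [nstep_succ _ (m + 1), ih]

lemma nstep_stopKernel_succ_of_notMem (hpf : ∀ a, (support (p a)).Finite) {S : Set V} {y : V}
    (hy : y ∉ S) (m : ℕ) (z : V) :
    nstep (stopKernel p S) (m + 1) y z = ∑' w, p y w * nstep (stopKernel p S) m w z := by
  simp_rw [nstep_succ' (stopKernel_support_finite hpf S), stopKernel_of_notMem hy]

lemma hitProb_nonneg (hp0 : ∀ a b, 0 ≤ p a b) (S : Set V) (x : V) : 0 ≤ hitProb p S x :=
  tsum_nonneg fun n => tsum_nonneg fun y => by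
    split_ifs
    exacts [nstep_nonneg (stopKernel_nonneg hp0 S) n x y, le_rfl]

lemma hitProb_singleton (p : V → V → ℝ) (z y : V) :
    hitProb p {z} y = ∑' m, nstep (stopKernel p {z}) m y z :=
  tsum_congr fun _ => (tsum_eq_single z fun _ hw => if_neg hw).trans (if_pos rfl)

lemma IsTransientKernel.summable_nstep_stopKernel (hp : IsTransientKernel p) (S : Set V) (y z : V) :
    Summable fun m => nstep (stopKernel p S) m y z :=
  (hp.summable_nstep y z).of_nonneg_of_le (nstep_nonneg (stopKernel_nonneg hp.nonneg S) · y z)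
    (nstep_mono (stopKernel_nonneg hp.nonneg S) (stopKernel_le hp.nonneg S) hp.support_finite · y z)

lemma nstep_eq_sum_firstPassage (hpf : ∀ a, (support (p a)).Finite) (z : V) (n : ℕ) (y : V) :
    nstep p n y z =
      ∑ m ∈ Finset.range (n + 1), nstep (stopKernel p {z}) m y z * nstep p (n - m) z z := by
  induction n generalizing y with
  | zero => by_cases h : y = z <;> simp [nstep_zero, h]
  | succ n ih =>
    by_cases hyz : y = z
    · subst hyz
      rw [Finset.sum_eq_single_of_mem 0 (by simp) fun m _ hm => by
        obtain ⟨m, rfl⟩ := Nat.exists_eq_succ_of_ne_zero hm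
        rw [nstep_stopKernel_succ_of_mem (Set.mem_singleton y), zero_mul]]
      simp [nstep_zero]
    · have hy : y ∉ ({z} : Set V) := hyz
      calc nstep p (n + 1) y z
          = ∑ w ∈ (hpf y).toFinset, ∑ m ∈ Finset.range (n + 1),
              p y w * nstep (stopKernel p {z}) m w z * nstep p (n - m) z z := by
            rw [nstep_succ' hpf, tsum_mul_eq_sum_of_support_finite (hpf y)]
            simp_rw [ih, Finset.mul_sum, mul_assoc]
        _ = ∑ m ∈ Finset.range (n + 1),
              nstep (stopKernel p {z}) (m + 1) y z * nstep p (n - m) z z := by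
            rw [Finset.sum_comm]
            simp_rw [nstep_stopKernel_succ_of_notMem hpf hy,
              tsum_mul_eq_sum_of_support_finite (hpf y), Finset.sum_mul]
        _ = _ := by
            rw [Finset.sum_range_succ' _ (n + 1), nstep_zero, if_neg hyz, zero_mul, add_zero]
            simp

lemma IsTransientKernel.tsum_nstep_eq_hitProb_mul (hp : IsTransientKernel p) (y z : V) :
    ∑' n, nstep p n y z = hitProb p {z} y * ∑' n, nstep p n z z := by
  have hf := hp.summable_nstep_stopKernel {z} y z
  rw [hitProb_singleton, tsum_mul_tsum_eq_tsum_sum_range_of_summable_norm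
    (by simpa only [Real.norm_eq_abs] using hf.abs)
    (by simpa only [Real.norm_eq_abs] using (hp.summable_nstep z z).abs)]
  exact tsum_congr (nstep_eq_sum_firstPassage hp.support_finite z · y)

lemma IsTransientKernel.hitProb_singleton_eq_tsum_of_ne (hp : IsTransientKernel p)
    {x z : V} (hxz : x ≠ z) :
    hitProb p {z} x = ∑' y, p x y * hitProb p {z} y := by
  have hx : x ∉ ({z} : Set V) := hxz
  rw [hitProb_singleton, (hp.summable_nstep_stopKernel {z} x z).tsum_eq_zero_add,
    nstep_zero, if_neg hxz, zero_add, tsum_mul_eq_sum_of_support_finite (hp.support_finite x)]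
  simp_rw [nstep_stopKernel_succ_of_notMem hp.support_finite hx,
    tsum_mul_eq_sum_of_support_finite (hp.support_finite x), hitProb_singleton, ← tsum_mul_left]
  exact Summable.tsum_finsetSum fun y _ =>
    (hp.summable_nstep_stopKernel {z} y z).mul_left _

lemma IsTransientKernel.tsum_nstep_mul_escape (hp : IsTransientKernel p) (x : V) :
    (∑' n, nstep p n x x) * (1 - ∑' y, p x y * hitProb p {x} y) = 1 := by
  have hstep : ∑' n, nstep p (n + 1) x x =
      (∑' y, p x y * hitProb p {x} y) * ∑' n, nstep p n x x := by
    simp_rw [nstep_succ' hp.support_finite, tsum_mul_eq_sum_of_support_finite (hp.support_finite x),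
      Finset.sum_mul, mul_assoc, ← hp.tsum_nstep_eq_hitProb_mul, ← tsum_mul_left]
    exact Summable.tsum_finsetSum fun y _ => (hp.summable_nstep y x).mul_left _
  have hrenewal := (hp.summable_nstep x x).tsum_eq_zero_add
  rw [nstep_zero, if_pos rfl, hstep] at hrenewal
  linear_combination hrenewal

lemma IsTransientKernel.eqMeasure_singleton (hp : IsTransientKernel p) (lam : V → ℝ) (x : V) :
    eqMeasure p lam {x} x = 1 / green p lam x x := by
  rw [eqMeasure, if_pos (Set.mem_singleton x), green, eq_one_div_of_mul_eq_one_right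
    (hp.tsum_nstep_mul_escape x)]
  field_simp

lemma IsTransientKernel.green_eq_hitProb_mul (hp : IsTransientKernel p) (lam : V → ℝ) (x z : V) :
    green p lam x z = hitProb p {z} x * green p lam z z := by
  rw [green, green, hp.tsum_nstep_eq_hitProb_mul]
  ring

lemma IsTransientKernel.hitProb_le_sum_singleton (hp : IsTransientKernel p) (F : Finset V) (y : V) :
    hitProb p F y ≤ ∑ z ∈ F, hitProb p {z} y := by
  have hle : ∀ n, ∑ z ∈ F, nstep (stopKernel p F) n y z ≤
      ∑ z ∈ F, nstep (stopKernel p {z}) n y z := fun n =>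
    Finset.sum_le_sum fun z hz => nstep_mono (stopKernel_nonneg hp.nonneg _)
      (stopKernel_anti hp.nonneg (by simpa using hz))
      (stopKernel_support_finite hp.support_finite _) n y z
  have hsum : Summable fun n => ∑ z ∈ F, nstep (stopKernel p {z}) n y z :=
    summable_sum fun z _ => hp.summable_nstep_stopKernel _ y z
  calc hitProb p F y = ∑' n, ∑ z ∈ F, nstep (stopKernel p F) n y z := by
        rw [hitProb_eq]
        exact tsum_congr fun n => (tsum_eq_sum fun z hz => if_neg hz).trans
          (Finset.sum_congr rfl fun z hz => if_pos hz)
    _ ≤ ∑' n, ∑ z ∈ F, nstep (stopKernel p {z}) n y z :=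
        Summable.tsum_le_tsum hle (hsum.of_nonneg_of_le (fun n => Finset.sum_nonneg fun z _ =>
          nstep_nonneg (stopKernel_nonneg hp.nonneg _) n y z) hle) hsum
    _ = ∑ z ∈ F, hitProb p {z} y := by
        simp_rw [hitProb_singleton]
        exact Summable.tsum_finsetSum fun z _ => hp.summable_nstep_stopKernel _ y z

lemma IsTransientKernel.eqMeasure_singleton_sub_le [DecidableEq V] (hp : IsTransientKernel p)
    {lam : V → ℝ} {x : V} (hlam : 0 ≤ lam x) {F : Finset V} (hx : x ∈ F) :
    eqMeasure p lam {x} x - lam x * ∑ z ∈ F.erase x, hitProb p {z} x ≤ eqMeasure p lam F x := by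
  have hreturn : ∑' y, p x y * hitProb p F y ≤
      ∑' y, p x y * hitProb p {x} y + ∑ z ∈ F.erase x, hitProb p {z} x := calc
    ∑' y, p x y * hitProb p F y
        ≤ ∑ y ∈ (hp.support_finite x).toFinset, p x y * ∑ z ∈ F, hitProb p {z} y := by
        rw [tsum_mul_eq_sum_of_support_finite (hp.support_finite x)]
        exact Finset.sum_le_sum fun y _ => mul_le_mul_of_nonneg_left
          (hp.hitProb_le_sum_singleton F y) (hp.nonneg x y)
    _ = ∑ z ∈ F, ∑' y, p x y * hitProb p {z} y := by
        simp_rw [Finset.mul_sum, tsum_mul_eq_sum_of_support_finite (hp.support_finite x)]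
        exact Finset.sum_comm
    _ = _ := by
        rw [← Finset.add_sum_erase F _ hx]
        congr 1
        exact Finset.sum_congr rfl fun z hz =>
          (hp.hitProb_singleton_eq_tsum_of_ne (Finset.ne_of_mem_erase hz).symm).symm
  rw [eqMeasure, eqMeasure, if_pos (Set.mem_singleton x), if_pos (Finset.mem_coe.2 hx)]
  nlinarith [mul_le_mul_of_nonneg_left hreturn hlam]

noncomputable def finCap (p : V → V → ℝ) (lam : V → ℝ) (K : Finset V) : ℝ :=
  ∑ x ∈ K, eqMeasure p lam K x

lemma ofReal_finCap_le_capaE (p : V → V → ℝ) (lam : V → ℝ) (K : Finset V) :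
    ENNReal.ofReal (finCap p lam K) ≤ capaE p lam K := by
  rw [capaE, tsum_eq_sum' (Set.support_indicator_subset), Finset.sum_congr rfl fun x hx =>
    Set.indicator_of_mem (Finset.mem_coe.2 hx) _]
  exact Finset.le_sum_of_subadditive _ ENNReal.ofReal_zero.le (fun _ _ => ENNReal.ofReal_add_le) _ _

lemma IsTransientKernel.card_mul_le_finCap (hp : IsTransientKernel p) {lam : V → ℝ} {c CV δ : ℝ}
    (hlam0 : ∀ x, 0 ≤ lam x) (hlam : ∀ x, lam x ≤ CV) (hesc : ∀ x, c ≤ eqMeasure p lam {x} x)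
    (hδ : 0 ≤ δ) {F : Finset V} (hF : ∀ x ∈ F, ∀ z ∈ F, x ≠ z → hitProb p {z} x ≤ δ) :
    F.card * (c - CV * (F.card * δ)) ≤ finCap p lam F := by
  classical
  have hpoint : ∀ x ∈ F, c - CV * (F.card * δ) ≤ eqMeasure p lam F x := fun x hx => by
    have hsum : ∑ z ∈ F.erase x, hitProb p {z} x ≤ F.card * δ := calc
      _ ≤ (F.erase x).card * δ := by
          simpa using Finset.sum_le_card_nsmul _ _ _ fun z hz =>
            hF x hx z (Finset.mem_of_mem_erase hz) (Finset.ne_of_mem_erase hz).symm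
      _ ≤ F.card * δ := by gcongr; exact F.erase_subset x
    have hsum0 : 0 ≤ ∑ z ∈ F.erase x, hitProb p {z} x :=
      Finset.sum_nonneg fun z _ => hitProb_nonneg hp.nonneg _ x
    have := hp.eqMeasure_singleton_sub_le (hlam0 x) hx
    nlinarith [hesc x, hlam0 x, hlam x, mul_le_mul (hlam x) hsum hsum0 ((hlam0 x).trans (hlam x))]
  simpa [finCap] using Finset.card_nsmul_le_sum F _ _ hpoint

lemma exists_finset_card_eq_pairwise_lt {d : V → V → ℝ} (hd_symm : ∀ x y, d x y = d y x)
    (hball : ∀ (x : V) (L : ℝ), {y | d x y ≤ L}.Finite) {A : Set V} (hA : A.Infinite) (R : ℝ) :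
    ∀ N : ℕ, ∃ F : Finset V, ↑F ⊆ A ∧ F.card = N ∧ (F : Set V).Pairwise fun x y => R < d x y
  | 0 => ⟨∅, by simp⟩
  | N + 1 => by
    classical
    obtain ⟨F, hFA, hcard, hsep⟩ := exists_finset_card_eq_pairwise_lt hd_symm hball hA R N
    have hnear : (↑F ∪ ⋃ b ∈ F, {y | d b y ≤ R}).Finite :=
      F.finite_toSet.union (F.finite_toSet.biUnion fun b _ => hball b R)
    obtain ⟨a, haA, hanear⟩ := (hA.sdiff hnear).nonempty
    simp only [Set.mem_union, Finset.mem_coe, Set.mem_iUnion, Set.mem_ofPred_eq, not_or,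
      not_exists, not_le] at hanear
    refine ⟨insert a F, ?_, by rw [Finset.card_insert_of_notMem hanear.1, hcard], ?_⟩
    · simpa [Set.insert_subset_iff] using ⟨haA, hFA⟩
    · rw [Finset.coe_insert, Set.pairwise_insert]
      exact ⟨hsep, fun b hb _ => ⟨hd_symm a b ▸ hanear.2 b hb, hanear.2 b hb⟩⟩

lemma IsTransientKernel.exists_hitProb_le_of_green_le (hp : IsTransientKernel p)
    {lam : V → ℝ} {d : V → V → ℝ} {cg Cg ν : ℝ} (hcg : 0 < cg)
    (hdiag : ∀ z, cg ≤ green p lam z z) (hoff : ∀ x z, x ≠ z → green p lam x z ≤ Cg * d x z ^ (-ν))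
    (hν : 0 < ν) {δ : ℝ} (hδ : 0 < δ) :
    ∃ R, ∀ x z, x ≠ z → R < d x z → hitProb p {z} x ≤ δ := by
  have hlim : Tendsto (fun r : ℝ => Cg * r ^ (-ν) / cg) atTop (𝓝 0) := by
    simpa using ((tendsto_rpow_neg_atTop hν).const_mul Cg).div_const cg
  obtain ⟨R, hR⟩ := eventually_atTop.1 (hlim.eventually_le_const hδ)
  refine ⟨R, fun x z hxz hRd => ((le_div_iff₀ hcg).2 ?_).trans (hR _ hRd.le)⟩
  calc hitProb p {z} x * cg ≤ hitProb p {z} x * green p lam z z :=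
        mul_le_mul_of_nonneg_left (hdiag z) (hitProb_nonneg hp.nonneg _ x)
    _ = green p lam x z := (hp.green_eq_hitProb_mul lam x z).symm
    _ ≤ Cg * d x z ^ (-ν) := hoff x z hxz

lemma IsTransientKernel.exists_finset_subset_le_finCap (hp : IsTransientKernel p)
    {lam : V → ℝ} {c CV : ℝ} (hlam0 : ∀ x, 0 ≤ lam x) (hlam : ∀ x, lam x ≤ CV) (hc : 0 < c)
    (hesc : ∀ x, c ≤ eqMeasure p lam {x} x) {d : V → V → ℝ} (hd_symm : ∀ x y, d x y = d y x)
    (hball : ∀ (x : V) (L : ℝ), {y | d x y ≤ L}.Finite)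
    (hdecay : ∀ δ > 0, ∃ R, ∀ x z, x ≠ z → R < d x z → hitProb p {z} x ≤ δ)
    {A : Set V} (hA : A.Infinite) (M : ℝ) : ∃ F : Finset V, ↑F ⊆ A ∧ M ≤ finCap p lam F := by
  obtain ⟨x, -⟩ := hA.nonempty
  have hCV : 0 ≤ CV := (hlam0 x).trans (hlam x)
  set N : ℕ := ⌈2 * M / c⌉₊
  set δ : ℝ := c / (2 * (CV * N + 1))
  have hδ : 0 < δ := by positivity
  obtain ⟨R, hR⟩ := hdecay δ hδ
  obtain ⟨F, hFA, hcard, hsep⟩ := exists_finset_card_eq_pairwise_lt hd_symm hball hA R N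
  refine ⟨F, hFA, le_trans ?_ (hp.card_mul_le_finCap hlam0 hlam hesc hδ.le
    fun x hx z hz hxz => hR x z hxz (hsep hx hz hxz))⟩
  have hinteract : CV * (N * δ) ≤ c / 2 := by
    rw [show CV * (N * δ) = c / 2 * (CV * N / (CV * N + 1)) by simp only [δ]; field_simp]
    exact mul_le_of_le_one_right (by positivity) (div_le_one_of_le₀ (by linarith) (by positivity))
  have hN : M ≤ N * (c / 2) := by
    have := Nat.le_ceil (2 * M / c)
    rw [div_le_iff₀ hc] at this
    linarith
  rw [hcard]
  exact hN.trans (by gcongr; linarith)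

lemma monotone_of_avoidance_law {Ω : Type*} [MeasurableSpace Ω] (μ : MeasureTheory.Measure Ω)
    (I : Ω → Set V) {u : ℝ} (hu : 0 < u) (cap : Finset V → ℝ)
    (hlaw : ∀ K : Finset V, μ {ω | I ω ∩ ↑K = ∅} = ENNReal.ofReal (Real.exp (-(u * cap K)))) :
    Monotone cap := by
  intro K K' hKK'
  have hmiss : μ {ω | I ω ∩ ↑K' = ∅} ≤ μ {ω | I ω ∩ ↑K = ∅} :=
    MeasureTheory.measure_mono fun ω (hω : I ω ∩ ↑K' = ∅) => Set.subset_eq_empty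
      (Set.inter_subset_inter_right _ (Finset.coe_subset.2 hKK')) hω
  rw [hlaw, hlaw, ENNReal.ofReal_le_ofReal_iff (Real.exp_nonneg _), Real.exp_le_exp] at hmiss
  exact le_of_mul_le_mul_left (by linarith) hu

lemma measure_inter_nonempty_eq_one_of_avoidance_law {Ω : Type*} [MeasurableSpace Ω]
    (μ : MeasureTheory.Measure Ω) [MeasureTheory.IsProbabilityMeasure μ] (I : Ω → Set V)
    {u : ℝ} (hu : 0 < u) (cap : Finset V → ℝ)
    (hlaw : ∀ K : Finset V, μ {ω | I ω ∩ ↑K = ∅} = ENNReal.ofReal (Real.exp (-(u * cap K))))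
    {A : Set V} (hA : MeasurableSet {ω | I ω ∩ A = ∅})
    (hcap : ∀ M, ∃ K : Finset V, ↑K ⊆ A ∧ M ≤ cap K) :
    μ {ω | (I ω ∩ A).Nonempty} = 1 := by
  have hlim : Tendsto (fun M => ENNReal.ofReal (Real.exp (-(u * M)))) atTop (𝓝 0) := by
    simpa using ENNReal.tendsto_ofReal (Real.tendsto_exp_atBot.comp
      (tendsto_neg_atTop_atBot.comp (tendsto_id.const_mul_atTop hu)))
  have hmiss : μ {ω | I ω ∩ A = ∅} = 0 := by
    refine nonpos_iff_eq_zero.1 (ge_of_tendsto' hlim fun M => ?_)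
    obtain ⟨K, hKA, hK⟩ := hcap M
    calc μ {ω | I ω ∩ A = ∅} ≤ μ {ω | I ω ∩ ↑K = ∅} :=
          MeasureTheory.measure_mono fun ω (hω : I ω ∩ A = ∅) => Set.subset_eq_empty
            (Set.inter_subset_inter_right _ hKA) hω
      _ ≤ _ := by
          rw [hlaw]
          gcongr
  rw [show {ω | (I ω ∩ A).Nonempty} = {ω | I ω ∩ A = ∅}ᶜ by
    ext; simp [Set.nonempty_iff_ne_empty], MeasureTheory.prob_compl_eq_one_sub hA, hmiss, tsub_zero]

lemma tendsto_capaE_inter_atTop {lam : V → ℝ} {d : V → V → ℝ} {x₀ : V}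
    (hball : ∀ L : ℝ, {y | d x₀ y ≤ L}.Finite) {A : Set V} (hmono : Monotone (finCap p lam))
    (hcap : ∀ M, ∃ F : Finset V, ↑F ⊆ A ∧ M ≤ finCap p lam F) :
    Tendsto (fun L : ℝ => capaE p lam (A ∩ {v | d x₀ v ≤ L})) atTop (𝓝 ⊤) := by
  refine ENNReal.tendsto_nhds_top fun n => ?_
  obtain ⟨F, hFA, hF⟩ := hcap (n + 1)
  obtain ⟨L₀, hL₀⟩ := (F.image (d x₀)).bddAbove
  filter_upwards [eventually_ge_atTop L₀] with L hL
  have hfin := (hball L).subset (Set.inter_subset_right (s := A))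
  have hFsub : F ⊆ hfin.toFinset := fun x hx => hfin.mem_toFinset.2
    ⟨hFA hx, (hL₀ (Finset.mem_coe.2 (Finset.mem_image_of_mem _ hx))).trans hL⟩
  calc (n : ℝ≥0∞) < ENNReal.ofReal (n + 1) := (ENNReal.ofReal_natCast n).symm.trans_lt
        ((ENNReal.ofReal_lt_ofReal_iff (by positivity)).2 (lt_add_one _))
    _ ≤ ENNReal.ofReal (finCap p lam hfin.toFinset) :=
        ENNReal.ofReal_le_ofReal (hF.trans (hmono hFsub))
    _ ≤ capaE p lam (A ∩ {v | d x₀ v ≤ L}) :=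
        (ofReal_finCap_le_capaE p lam hfin.toFinset).trans_eq (by rw [hfin.coe_toFinset])

lemma support_transition_finite (G : SimpleGraph V) [∀ v : V, Fintype (G.neighborSet v)]
    {w : V → V → ℝ} {lam : V → ℝ} (hw_nonneg : ∀ x y, 0 ≤ w x y)
    (hw_adj : ∀ x y, 0 < w x y ↔ G.Adj x y) (hp : ∀ x y, p x y = w x y / lam x) (a : V) :
    (support (p a)).Finite :=
  (G.neighborSet a).toFinite.subset fun b hb =>
    (hw_adj a b).1 <| (hw_nonneg a b).lt_of_ne' fun h => hb (by rw [hp, h, zero_div])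

lemma le_sum_ball {d : V → V → ℝ} (hd_self : ∀ x, d x x = 0) {lam : V → ℝ}
    (hlam0 : ∀ x, 0 ≤ lam x) {x : V} {L : ℝ} (hL : 0 ≤ L) (hfin : {y | d x y ≤ L}.Finite) :
    lam x ≤ ∑ y ∈ hfin.toFinset, lam y :=
  Finset.single_le_sum (fun y _ => hlam0 y) (hfin.mem_toFinset.2 (by simp [hd_self, hL]))

end

/-- for infinite connected A, cap(A ∩ B(x₀,L)) → ∞ as L → ∞, and consequently
the random interlacement set I^u (characterized by P(I^u ∩ K = ∅) = exp(−u·cap K)) intersects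
A almost surely. -/
theorem capacity_to_infinity_and_interlacement_hits
    {V : Type*} (G : SimpleGraph V) [∀ v : V, Fintype (G.neighborSet v)] [Infinite V]
    (hconn : G.Connected)
    (w : V → V → ℝ) (lam : V → ℝ) (p : V → V → ℝ) (d : V → V → ℝ)
    (hw_symm : ∀ x y, w x y = w y x)
    (hw_nonneg : ∀ x y, 0 ≤ w x y)
    (hw_adj : ∀ x y, 0 < w x y ↔ G.Adj x y)
    (hlam : ∀ x, lam x = ∑ y ∈ G.neighborFinset x, w x y)
    (hp : ∀ x y, p x y = w x y / lam x)
    (htrans : ∀ x y, Summable (fun n => nstep p n x y))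
    (c₀ : ℝ) (hc₀ : 0 < c₀) (hp₀ : ∀ x y, G.Adj x y → c₀ ≤ p x y)
    (hd_symm : ∀ x y, d x y = d y x)
    (hd_self : ∀ x, d x x = 0)
    (hd_nonneg : ∀ x y, 0 ≤ d x y)
    (hd_tri : ∀ x y z, d x z ≤ d x y + d y z)
    (hBfin : ∀ (x : V) (L : ℝ), {y | d x y ≤ L}.Finite)
    (α β : ℝ) (hα : 2 < α) (hβ₂ : 2 ≤ β) (hβα : β < α)
    (cV CV : ℝ) (hcV : 0 < cV)
    (hVol : ∀ (x : V) (L : ℝ), 1 ≤ L →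
      cV * L ^ α ≤ ∑ y ∈ (hBfin x L).toFinset, lam y ∧
        ∑ y ∈ (hBfin x L).toFinset, lam y ≤ CV * L ^ α)
    (cg Cg : ℝ) (hcg : 0 < cg)
    (hGdiag : ∀ x : V, cg ≤ green p lam x x ∧ green p lam x x ≤ Cg)
    (hGoff : ∀ x y : V, x ≠ y →
      cg * d x y ^ (-(α - β)) ≤ green p lam x y ∧
        green p lam x y ≤ Cg * d x y ^ (-(α - β)))
    (A : Set V) (hAinf : A.Infinite)
    (hAconn : ∀ a ∈ A, ∀ b ∈ A, ∃ wk : G.Walk a b, ∀ v ∈ wk.support, v ∈ A)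
    (x₀ : V)
    (u : ℝ) (hu : 0 < u)
    {Ω : Type*} [MeasurableSpace Ω] (μ : MeasureTheory.Measure Ω)
    (hμ : MeasureTheory.IsProbabilityMeasure μ)
    (I : Ω → Set V)
    (hImeas : ∀ S : Set V, MeasurableSet {ω | I ω ∩ S = ∅})
    (hIlaw : ∀ K : Finset V, μ {ω | I ω ∩ (↑K : Set V) = ∅} =
      ENNReal.ofReal (Real.exp (-(u * ∑ x ∈ K, eqMeasure p lam (↑K : Set V) x)))) :
    Filter.Tendsto (fun L : ℝ => capaE p lam (A ∩ {v | d x₀ v ≤ L}))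
      Filter.atTop (nhds (⊤ : ℝ≥0∞)) ∧
    μ {ω | (I ω ∩ A).Nonempty} = 1 := by
  have hlam0 : ∀ x, 0 ≤ lam x := fun x => hlam x ▸ Finset.sum_nonneg fun y _ => hw_nonneg x y
  have hkernel : IsTransientKernel p :=
    ⟨fun a b => hp a b ▸ div_nonneg (hw_nonneg a b) (hlam0 a),
      support_transition_finite G hw_nonneg hw_adj hp, htrans⟩
  have hlamCV : ∀ x, lam x ≤ CV := fun x =>
    (le_sum_ball hd_self hlam0 zero_le_one (hBfin x 1)).trans (by simpa using (hVol x 1 le_rfl).2)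
  have hCg : 0 < Cg := hcg.trans_le ((hGdiag x₀).1.trans (hGdiag x₀).2)
  have hesc : ∀ x, 1 / Cg ≤ eqMeasure p lam {x} x := fun x => by
    rw [hkernel.eqMeasure_singleton]
    exact one_div_le_one_div_of_le (hcg.trans_le (hGdiag x).1) (hGdiag x).2
  have hdecay : ∀ δ > 0, ∃ R, ∀ x z, x ≠ z → R < d x z → hitProb p {z} x ≤ δ := fun δ hδ =>
    hkernel.exists_hitProb_le_of_green_le hcg (fun z => (hGdiag z).1)
      (fun x z hxz => (hGoff x z hxz).2) (sub_pos.2 hβα) hδ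
  have hcap : ∀ M, ∃ F : Finset V, ↑F ⊆ A ∧ M ≤ finCap p lam F :=
    hkernel.exists_finset_subset_le_finCap hlam0 hlamCV (one_div_pos.2 hCg) hesc hd_symm
      hBfin hdecay hAinf
  exact ⟨tendsto_capaE_inter_atTop (hBfin x₀) (monotone_of_avoidance_law μ I hu _ hIlaw) hcap,
    measure_inter_nonempty_eq_one_of_avoidance_law μ I hu _ hIlaw (hImeas A) hcap⟩
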